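/- Let σ be a permutation of order p (odd prime) with c cycles and f fixed points, and let g(k) = d + ⌈d/2⌉ + ⌈d/4⌉ + ... + ⌈d/2^{k-1}⌉. If a binary self-dual [n, n/2, d] code C admits σ as automorphism, and 2 is a primitive root modulo p, then c is even. -/

import Mathlib

/-!
Let `N = ∑_{k<p} σ^k`, acting on `F₂ⁿ` by `v ↦ ∑_{k<p} v ∘ σ^k`; as an operator it is `Φ_p(σ)`.
Since `p` is odd, `N` fixes every `σ`-invariant vector, so `N` is an idempotent whose image, the
invariant vectors, is orthogonal to its kernel. The image has dimension the number of orbits,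
`c + f`, so `ker N` has dimension `c (p - 1)`; and `E_σ(C) = C ∩ ker N` is self-dual inside
`ker N`, so `2 dim E_σ(C) = c (p - 1)`. As 2 is a primitive root mod `p`, `Φ_p` is irreducible
over `F₂`, and `E_σ(C)` is a vector space over the field `F₂[x]/Φ_p` of degree `p - 1`; so
`p - 1` divides `dim E_σ(C)`, which forces `c` to be even.
-/

open Finset

/-- Hamming weight of a binary vector. -/
def wt {ι : Type*} [Fintype ι] (v : ι → ZMod 2) : ℕ :=
  (Finset.univ.filter fun i => v i ≠ 0).card

/-- Dual of a binary code under the standard dot product. -/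
def dualCode {ι : Type*} [Fintype ι] (C : Submodule (ZMod 2) (ι → ZMod 2)) :
    Submodule (ZMod 2) (ι → ZMod 2) where
  carrier := {x | ∀ c ∈ C, ∑ i, x i * c i = 0}
  add_mem' := by
    intro a b ha hb c hc
    have := ha c hc; have := hb c hc
    simp only [Pi.add_apply, add_mul, Finset.sum_add_distrib]
    simp [ha c hc, hb c hc]
  zero_mem' := by intro c hc; simp
  smul_mem' := by
    intro r a ha c hc
    simp only [Pi.smul_apply, smul_eq_mul, mul_assoc, ← Finset.mul_sum]
    simp [ha c hc]

/-- Fixed subcode F_σ(C). -/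
def fixedCode {ι : Type*} (σ : Equiv.Perm ι) (C : Submodule (ZMod 2) (ι → ZMod 2)) :
    Submodule (ZMod 2) (ι → ZMod 2) where
  carrier := {v | v ∈ C ∧ v ∘ σ = v}
  add_mem' := by
    rintro a b ⟨ha, ha'⟩ ⟨hb, hb'⟩
    refine ⟨C.add_mem ha hb, ?_⟩
    funext i
    simpa using congrFun (congrArg₂ (· + ·) ha' hb') i
  zero_mem' := ⟨C.zero_mem, rfl⟩
  smul_mem' := by
    rintro r a ⟨ha, ha'⟩
    exact ⟨C.smul_mem r ha, by funext i; simpa using congrArg (r • ·) (congrFun ha' i)⟩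

/-- Subcode E_σ(C): codewords with even weight on each cycle (and zero on fixed points). -/
def evenCode {ι : Type*} (p : ℕ) (σ : Equiv.Perm ι) (C : Submodule (ZMod 2) (ι → ZMod 2)) :
    Submodule (ZMod 2) (ι → ZMod 2) where
  carrier := {v | v ∈ C ∧ ∀ i, ∑ k ∈ Finset.range p, v ((σ ^ k) i) = 0}
  add_mem' := by
    rintro a b ⟨ha, ha'⟩ ⟨hb, hb'⟩
    refine ⟨C.add_mem ha hb, fun i => ?_⟩
    simp [Finset.sum_add_distrib, ha' i, hb' i]
  zero_mem' := ⟨C.zero_mem, by simp⟩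
  smul_mem' := by
    rintro r a ⟨ha, ha'⟩
    refine ⟨C.smul_mem r ha, fun i => ?_⟩
    simp only [Pi.smul_apply, smul_eq_mul]
    rw [← Finset.mul_sum, ha' i, mul_zero]

open Module LinearMap Polynomial MulAction

section Projection

variable {K V : Type*} [Field K] [AddCommGroup V] [Module K V] [FiniteDimensional K V]
  {B : LinearMap.BilinForm K V}

theorem LinearMap.BilinForm.two_mul_finrank_of_orthogonal_eq_self (hB : B.Nondegenerate)
    {W : Submodule K V} (hW : B.orthogonal W = W) : 2 * finrank K W = finrank K V := by
  have h := B.finrank_orthogonal hB W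
  rw [hW] at h
  have := Submodule.finrank_le W
  omega

theorem LinearMap.BilinForm.two_mul_finrank_inf_ker_of_orthogonal_eq_self (hB : B.IsSymm)
    (hnd : B.Nondegenerate) {P : V →ₗ[K] V} (hP : ∀ x, P (P x) = P x)
    (hPorth : ∀ x ∈ ker P, ∀ y ∈ range P, B x y = 0)
    {W : Submodule K V} (hW : B.orthogonal W = W) (hPW : ∀ w ∈ W, P w ∈ W) :
    2 * finrank K ↥(W ⊓ ker P) = finrank K (ker P) := by
  have hsub_mem : ∀ y, y - P y ∈ ker P := fun y => by simp [hP]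
  have hsplit : ∀ x ∈ ker P, ∀ y, B x y = B x (y - P y) := fun x hx y => by
    rw [map_sub, hPorth x hx (P y) (mem_range_self P y), sub_zero]
  have hnd' : (B.restrict (ker P)).Nondegenerate :=
    (hB.restrict _).isRefl.nondegenerate_iff_separatingLeft.2 fun x hx =>
      Subtype.ext <| hnd.1 x fun y => (hsplit x x.2 y).trans (hx ⟨_, hsub_mem y⟩)
  have hself : (B.restrict (ker P)).orthogonal ((W ⊓ ker P).comap (ker P).subtype) =
      (W ⊓ ker P).comap (ker P).subtype := by
    ext x
    simp only [BilinForm.mem_orthogonal_iff, Submodule.mem_comap, Submodule.subtype_apply,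
      Submodule.mem_inf, x.2, and_true, Subtype.forall, BilinForm.restrict_apply,
      domRestrict_apply]
    constructor
    · intro hx
      rw [← hW, BilinForm.mem_orthogonal_iff]
      intro v hv
      rw [hB.eq, hsplit x x.2 v, hB.eq]
      exact hx _ (hsub_mem v) ⟨W.sub_mem hv (hPW v hv), hsub_mem v⟩
    · intro hx y _ hy
      rw [← hW] at hy
      rw [hB.eq]
      exact hy.1 x hx
  rw [← (B.restrict (ker P)).two_mul_finrank_of_orthogonal_eq_self hnd' hself,
    (Submodule.comapSubtypeEquivOfLe inf_le_right).finrank_eq]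

end Projection

section OrbitSum

variable (R : Type*) {ι : Type*} [CommRing R] (σ : Equiv.Perm ι) (p : ℕ)

noncomputable def orbitSum : (ι → R) →ₗ[R] (ι → R) :=
  ∑ k ∈ range p, funLeft R R ⇑σ ^ k

variable {R σ p}

theorem funLeft_perm_pow_apply (k : ℕ) (v : ι → R) : (funLeft R R ⇑σ ^ k) v = v ∘ ⇑(σ ^ k) := by
  induction k generalizing v with
  | zero => rfl
  | succ k ih => rw [pow_succ, Module.End.mul_apply, ih, pow_succ']; rfl

theorem orbitSum_apply (v : ι → R) (i : ι) :
    orbitSum R σ p v i = ∑ k ∈ range p, v ((σ ^ k) i) := by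
  simp [orbitSum, LinearMap.sum_apply, funLeft_perm_pow_apply]

theorem orbitSum_comp_perm (v : ι → R) : orbitSum R σ p (v ∘ σ) = orbitSum R σ p v ∘ σ := by
  ext i
  simp only [orbitSum_apply, Function.comp_apply, ← Equiv.Perm.mul_apply, ← pow_succ,
    ← pow_succ']

theorem orbitSum_comp_eq_self (hσ : σ ^ p = 1) (v : ι → R) :
    orbitSum R σ p v ∘ σ = orbitSum R σ p v := by
  ext i
  have hshift := (sum_range_succ' (fun k => v ((σ ^ k) i)) p).symm.trans
    (sum_range_succ (fun k => v ((σ ^ k) i)) p)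
  rw [hσ, pow_zero] at hshift
  simpa [orbitSum_apply, ← Equiv.Perm.mul_apply, ← pow_succ] using hshift

theorem comp_zpow_eq_self {β : Type*} {v : ι → β} (hv : v ∘ σ = v) (k : ℤ) : v ∘ ⇑(σ ^ k) = v := by
  induction k using Int.induction_on with
  | zero => rfl
  | succ k ih => rw [zpow_add_one, Equiv.Perm.coe_mul, ← Function.comp_assoc, ih, hv]
  | pred k ih =>
    rw [zpow_sub_one, Equiv.Perm.coe_mul, ← Function.comp_assoc, ih]
    conv_lhs => rw [← hv]
    ext i
    simp

theorem orbitSum_eq_smul {v : ι → R} (hv : v ∘ σ = v) : orbitSum R σ p v = (p : R) • v := by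
  ext i
  have h k : v ((σ ^ k) i) = v i := by
    simpa using congrFun (comp_zpow_eq_self hv k) i
  simp [orbitSum_apply, h]

theorem orbitSum_dotProduct [Fintype ι] {u : ι → R} (hu : u ∘ σ = u) (w : ι → R) :
    orbitSum R σ p w ⬝ᵥ u = p * (w ⬝ᵥ u) := by
  have h k : w ∘ ⇑(σ ^ k) ⬝ᵥ u = w ⬝ᵥ u := by
    conv_lhs => rw [← comp_zpow_eq_self hu k]
    exact comp_equiv_dotProduct_comp_equiv _ _ _
  simp [orbitSum, LinearMap.sum_apply, funLeft_perm_pow_apply, sum_dotProduct, h]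

theorem orbitSum_orbitSum (hσ : σ ^ p = 1) (hp : (p : R) = 1) (v : ι → R) :
    orbitSum R σ p (orbitSum R σ p v) = orbitSum R σ p v := by
  rw [orbitSum_eq_smul (orbitSum_comp_eq_self hσ v), hp, one_smul]

theorem dotProduct_eq_zero_of_mem_ker_of_mem_range [Fintype ι] (hσ : σ ^ p = 1)
    (hp : (p : R) = 1) {x y : ι → R} (hx : x ∈ ker (orbitSum R σ p))
    (hy : y ∈ range (orbitSum R σ p)) : x ⬝ᵥ y = 0 := by
  obtain ⟨z, rfl⟩ := hy
  have := orbitSum_dotProduct (p := p) (orbitSum_comp_eq_self hσ z) x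
  rwa [mem_ker.1 hx, zero_dotProduct, hp, one_mul, eq_comm] at this

theorem orbitSum_mem {C : Submodule R (ι → R)} (haut : ∀ v ∈ C, v ∘ σ ∈ C) {v : ι → R}
    (hv : v ∈ C) : orbitSum R σ p v ∈ C := by
  rw [orbitSum, LinearMap.sum_apply]
  exact C.sum_mem fun k _ => Module.End.pow_apply_mem_of_forall_mem k haut v hv

end OrbitSum

section Divisibility

theorem natDegree_dvd_finrank_of_aeval_eq_zero {K M : Type*} [Field K] [AddCommGroup M]
    [Module K M] {q : K[X]} (hq : Irreducible q) {T : Module.End K M} (hT : aeval T q = 0) :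
    q.natDegree ∣ finrank K M := by
  have := Fact.mk hq
  let φ : AdjoinRoot q →ₐ[K] Module.End K M :=
    Ideal.Quotient.liftₐ _ (aeval T) fun g hg => by
      obtain ⟨g, rfl⟩ := Ideal.mem_span_singleton'.1 hg
      rw [map_mul, hT, mul_zero]
  let : Module (AdjoinRoot q) M := Module.compHom M φ.toRingHom
  have : IsScalarTower K (AdjoinRoot q) M := .of_algebraMap_smul fun r x => by
    change φ (algebraMap K _ r) x = r • x
    rw [φ.commutes, Module.algebraMap_end_apply]
  rw [← Module.finrank_mul_finrank K (AdjoinRoot q) M,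
    (AdjoinRoot.powerBasis hq.ne_zero).finrank, AdjoinRoot.powerBasis_dim]
  exact dvd_mul_right _ _

theorem irreducible_cyclotomic_of_orderOf_eq {ℓ p : ℕ} [Fact ℓ.Prime] (hp : p.Prime)
    (hℓ : orderOf (ℓ : ZMod p) = p - 1) : Irreducible (cyclotomic p (ZMod ℓ)) := by
  have := Fact.mk hp
  have hℓp : ¬ℓ ∣ p := by
    intro h
    rw [(Nat.prime_dvd_prime_iff_eq Fact.out hp).1 h, ZMod.natCast_self, orderOf_zero] at hℓ
    have := hp.two_le
    omega
  refine ZMod.irreducible_of_dvd_cyclotomic_of_natDegree hℓp dvd_rfl ?_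
  rw [natDegree_cyclotomic, Nat.totient_prime hp, ← orderOf_units, ZMod.coe_unitOfCoprime, hℓ]

end Divisibility

section Orbits

variable {α : Type*} {σ : Equiv.Perm α}

theorem zpowers_smul_eq_self_iff_of_ne_one (hσ : (orderOf σ).Prime) {g : Subgroup.zpowers σ}
    (hg : g ≠ 1) (x : α) : g • x = x ↔ σ x = x := by
  constructor
  · intro h
    have : Fact (Nat.card (Subgroup.zpowers σ)).Prime := ⟨by rwa [Nat.card_zpowers]⟩
    rcases (stabilizer (Subgroup.zpowers σ) x).eq_bot_or_eq_top_of_prime_card with hbot | htop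
    · exact absurd (hbot ▸ mem_stabilizer_iff.2 h) (by simpa using hg)
    · have hσ_mem : (⟨σ, Subgroup.mem_zpowers σ⟩ : Subgroup.zpowers σ) ∈ stabilizer _ x :=
        htop ▸ Subgroup.mem_top _
      exact mem_stabilizer_iff.1 hσ_mem
  · intro h
    obtain ⟨k, hk⟩ := Subgroup.mem_zpowers_iff.1 g.2
    have := mem_fixedBy_zpow (show x ∈ fixedBy α σ from h) k
    rwa [hk] at this

theorem card_orbits_zpowers_mul_orderOf [Fintype α] [DecidableEq α] (hσ : (orderOf σ).Prime) :
    Nat.card (orbitRel.Quotient (Subgroup.zpowers σ) α) * orderOf σ =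
      Fintype.card α + (orderOf σ - 1) * #{x | σ x = x} := by
  classical
  have hburnside := sum_card_fixedBy_eq_card_orbits_mul_card_group (Subgroup.zpowers σ) α
  have hfix : ∀ g ∈ ({1}ᶜ : Finset (Subgroup.zpowers σ)),
      Fintype.card (fixedBy α g) = #{x | σ x = x} := fun g hg => by
    rw [Fintype.card_ofFinset]
    exact congrArg card <|
      filter_congr fun x _ => zpowers_smul_eq_self_iff_of_ne_one hσ (by simpa using hg) x
  rw [Fintype.sum_eq_add_sum_compl 1, sum_congr rfl hfix, sum_const, card_compl, card_singleton,
    Fintype.card_zpowers, smul_eq_mul] at hburnside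
  rw [Nat.card_eq_fintype_card, ← hburnside]
  simp

end Orbits

section BinaryCode

variable {ι : Type*} {σ : Equiv.Perm ι} {p : ℕ} {C : Submodule (ZMod 2) (ι → ZMod 2)}

theorem dotProductBilin_nondegenerate {R : Type*} [CommRing R] [Fintype ι] :
    (dotProductBilin R R : LinearMap.BilinForm R (ι → R)).Nondegenerate :=
  ⟨fun _ hx => dotProduct_eq_zero_iff.1 hx,
    fun y hy => dotProduct_eq_zero_iff.1 fun w => (dotProduct_comm y w).trans (hy w)⟩

theorem dualCode_eq_orthogonal [Fintype ι] (C : Submodule (ZMod 2) (ι → ZMod 2)) :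
    dualCode C = LinearMap.BilinForm.orthogonal (dotProductBilin (ZMod 2) (ZMod 2)) C := by
  ext x
  simp only [LinearMap.BilinForm.mem_orthogonal_iff, dotProductBilin_apply_apply,
    dotProduct_comm _ x]
  rfl

theorem evenCode_eq_inf_ker (C : Submodule (ZMod 2) (ι → ZMod 2)) :
    evenCode p σ C = C ⊓ ker (orbitSum (ZMod 2) σ p) := by
  ext v
  rw [Submodule.mem_inf, mem_ker, funext_iff]
  simp only [orbitSum_apply, Pi.zero_apply]
  rfl

theorem fixedCode_top_eq_range (hσ : σ ^ p = 1) (hp : Odd p) :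
    fixedCode σ ⊤ = range (orbitSum (ZMod 2) σ p) := by
  ext v
  constructor
  · rintro ⟨-, hv⟩
    exact ⟨v, by rw [orbitSum_eq_smul hv, ZMod.natCast_eq_one_iff_odd.2 hp, one_smul]⟩
  · rintro ⟨w, rfl⟩
    exact ⟨trivial, orbitSum_comp_eq_self hσ w⟩

theorem finrank_fixedCode_top [Fintype ι] (σ : Equiv.Perm ι) :
    finrank (ZMod 2) (fixedCode σ ⊤) = Nat.card (orbitRel.Quotient (Subgroup.zpowers σ) ι) := by
  classical
  let π : ι → orbitRel.Quotient (Subgroup.zpowers σ) ι := Quotient.mk _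
  have hrange : range (funLeft (ZMod 2) (ZMod 2) π) = fixedCode σ ⊤ := by
    ext v
    constructor
    · rintro ⟨w, rfl⟩
      exact ⟨trivial, funext fun i =>
        congrArg w (Quotient.sound ⟨⟨σ, Subgroup.mem_zpowers σ⟩, rfl⟩)⟩
    · rintro ⟨-, hv⟩
      refine ⟨Quotient.lift v fun a b ⟨g, hg⟩ => ?_, rfl⟩
      obtain ⟨k, hk⟩ := Subgroup.mem_zpowers_iff.1 g.2
      rw [← hg, ← congrFun (comp_zpow_eq_self hv k) b, Function.comp_apply, hk]
      rfl
  rw [← hrange, finrank_range_of_inj (funLeft_injective_of_surjective _ _ _ Quotient.mk_surjective),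
    finrank_fintype_fun_eq_card, Nat.card_eq_fintype_card]

theorem two_mul_finrank_evenCode [Fintype ι] (hσ : σ ^ p = 1) (hp : Odd p) (hself : C = dualCode C)
    (haut : ∀ v ∈ C, v ∘ σ ∈ C) :
    2 * finrank (ZMod 2) (evenCode p σ C) = finrank (ZMod 2) (ker (orbitSum (ZMod 2) σ p)) := by
  have hp1 : (p : ZMod 2) = 1 := ZMod.natCast_eq_one_iff_odd.2 hp
  rw [evenCode_eq_inf_ker]
  exact LinearMap.BilinForm.two_mul_finrank_inf_ker_of_orthogonal_eq_self
    ⟨dotProduct_comm⟩ dotProductBilin_nondegenerate (orbitSum_orbitSum hσ hp1)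
    (fun x hx y hy => dotProduct_eq_zero_of_mem_ker_of_mem_range hσ hp1 hx hy)
    (by rw [← dualCode_eq_orthogonal, ← hself]) fun w hw => orbitSum_mem haut hw

theorem finrank_ker_orbitSum [Fintype ι] [DecidableEq ι] (hp : p.Prime) (hodd : Odd p)
    (hord : orderOf σ = p) {c : ℕ} (hn : Fintype.card ι = c * p + #{i | σ i = i}) :
    finrank (ZMod 2) (ker (orbitSum (ZMod 2) σ p)) = c * (p - 1) := by
  have hrank := (orbitSum (ZMod 2) σ p).finrank_range_add_finrank_ker
  rw [← fixedCode_top_eq_range (hord ▸ pow_orderOf_eq_one σ) hodd, finrank_fixedCode_top,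
    finrank_fintype_fun_eq_card] at hrank
  have horbits := card_orbits_zpowers_mul_orderOf (hord ▸ hp : (orderOf σ).Prime)
  rw [hord] at horbits
  obtain ⟨q, rfl⟩ : ∃ q, p = q + 1 := ⟨p - 1, (Nat.sub_add_cancel hp.one_le).symm⟩
  rw [Nat.add_sub_cancel] at horbits ⊢
  have hcard : Nat.card (orbitRel.Quotient (Subgroup.zpowers σ) ι) = c + #{i | σ i = i} :=
    Nat.eq_of_mul_eq_mul_right (show 0 < q + 1 by omega) (by rw [horbits, hn]; ring)
  linarith

theorem sub_one_dvd_finrank_evenCode (hp : p.Prime) (hprim : orderOf (2 : ZMod p) = p - 1)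
    (haut : ∀ v ∈ C, v ∘ σ ∈ C) : p - 1 ∣ finrank (ZMod 2) (evenCode p σ C) := by
  have := Fact.mk hp
  have hE : ∀ v ∈ evenCode p σ C, funLeft (ZMod 2) (ZMod 2) σ v ∈ evenCode p σ C := by
    simp only [evenCode_eq_inf_ker, Submodule.mem_inf, mem_ker]
    rintro v ⟨hvC, hv⟩
    exact ⟨haut v hvC, (orbitSum_comp_perm v).trans (by rw [hv]; rfl)⟩
  have hT : aeval ((funLeft (ZMod 2) (ZMod 2) σ).restrict hE) (cyclotomic p (ZMod 2)) = 0 := by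
    ext v : 2
    rw [cyclotomic_prime, map_sum]
    have hv : (v : ι → ZMod 2) ∈ ker (orbitSum (ZMod 2) σ p) :=
      ((evenCode_eq_inf_ker C).le v.2).2
    simp only [map_pow, aeval_X, LinearMap.sum_apply, Submodule.coe_sum, ZeroMemClass.coe_zero,
      LinearMap.zero_apply]
    rw [← mem_ker.1 hv, orbitSum, LinearMap.sum_apply]
    refine Finset.sum_congr rfl fun k _ => ?_
    rw [Module.End.pow_restrict]
    rfl
  have hirr := irreducible_cyclotomic_of_orderOf_eq (ℓ := 2) hp (by simpa using hprim)
  simpa [natDegree_cyclotomic, Nat.totient_prime hp] using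
    natDegree_dvd_finrank_of_aeval_eq_zero hirr hT

end BinaryCode

theorem statement17_general {n p c f : ℕ} (hp : p.Prime) (hodd : Odd p)
    (hprim : orderOf (2 : ZMod p) = p - 1)
    (C : Submodule (ZMod 2) (Fin n → ZMod 2))
    (hself : C = dualCode C)
    (σ : Equiv.Perm (Fin n))
    (haut : ∀ v, v ∈ C ↔ v ∘ σ ∈ C)
    (hord : orderOf σ = p)
    (hfix : (Finset.univ.filter fun i => σ i = i).card = f)
    (hn : n = c * p + f) :
    Even c := by
  have hstable : ∀ v ∈ C, v ∘ σ ∈ C := fun v hv => (haut v).1 hv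
  have hE := two_mul_finrank_evenCode (hord ▸ pow_orderOf_eq_one σ) hodd hself hstable
  rw [finrank_ker_orbitSum hp hodd hord (c := c) (by rw [Fintype.card_fin, hfix, hn])] at hE
  obtain ⟨m, hm⟩ := sub_one_dvd_finrank_evenCode hp hprim hstable
  exact ⟨m, Nat.eq_of_mul_eq_mul_right (Nat.sub_pos_of_lt hp.one_lt) (by rw [← hE, hm]; ring)⟩

/-- If a binary self-dual [n, n/2, d] code has an automorphism of type p-(c,f) where
`p` is an odd prime and 2 is a primitive root modulo `p`, then `c` is even. -/
theorem statement17 {n p c f d : ℕ} (hp : p.Prime) (hodd : Odd p)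
    (hprim : orderOf (2 : ZMod p) = p - 1)
    (C : Submodule (ZMod 2) (Fin n → ZMod 2))
    (hself : C = dualCode C)
    (hdim : Module.finrank (ZMod 2) C = n / 2)
    (hmin : ∀ v ∈ C, v ≠ 0 → d ≤ wt v) (hex : ∃ v ∈ C, wt v = d)
    (σ : Equiv.Perm (Fin n))
    (haut : ∀ v, v ∈ C ↔ v ∘ σ ∈ C)
    (hord : orderOf σ = p)
    (hfix : (Finset.univ.filter fun i => σ i = i).card = f)
    (hn : n = c * p + f) :
    Even c :=
  statement17_general hp hodd hprim C hself σ haut hord hfix hn
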